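/- Let Σ₁ and Σ₂ be n×n real symmetric positive semidefinite matrices. Then Tr[Σ₁ + Σ₂ − 2 (Σ₂^{1/2} Σ₁ Σ₂^{1/2})^{1/2}] ≥ 0. -/

import Mathlib

open Matrix

/-- The symmetric positive semidefinite square root of a positive semidefinite
real matrix (junk value `0` on non-PSD matrices). -/
noncomputable def psdSqrt {n : ℕ} (M : Matrix (Fin n) (Fin n) ℝ) :
    Matrix (Fin n) (Fin n) ℝ :=
  open scoped Classical in
  if h : M.PosSemidef then
    (h.1.eigenvectorUnitary : Matrix (Fin n) (Fin n) ℝ) *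
      diagonal ((↑) ∘ (√·) ∘ h.1.eigenvalues) *
      (star h.1.eigenvectorUnitary : Matrix (Fin n) (Fin n) ℝ)
  else 0

lemma psdSqrt_posSemidef {n : ℕ} {M : Matrix (Fin n) (Fin n) ℝ} (h : M.PosSemidef) :
    (psdSqrt M).PosSemidef := by
  rw [psdSqrt, dif_pos h]
  have hD : (diagonal ((↑) ∘ (√·) ∘ h.1.eigenvalues) : Matrix (Fin n) (Fin n) ℝ).PosSemidef :=
    PosSemidef.diagonal (fun i => by simp [Real.sqrt_nonneg])
  have := hD.mul_mul_conjTranspose_same (h.1.eigenvectorUnitary : Matrix (Fin n) (Fin n) ℝ)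
  simpa [Unitary.coe_star, Matrix.star_eq_conjTranspose] using this

lemma psdSqrt_mul_self {n : ℕ} {M : Matrix (Fin n) (Fin n) ℝ} (h : M.PosSemidef) :
    psdSqrt M * psdSqrt M = M := by
  rw [psdSqrt, dif_pos h]
  have hU : (star h.1.eigenvectorUnitary : Matrix (Fin n) (Fin n) ℝ) *
      (h.1.eigenvectorUnitary : Matrix (Fin n) (Fin n) ℝ) = 1 := Unitary.coe_star_mul_self _
  have hDD : (diagonal ((↑) ∘ (√·) ∘ h.1.eigenvalues) : Matrix (Fin n) (Fin n) ℝ) *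
      diagonal ((↑) ∘ (√·) ∘ h.1.eigenvalues) = diagonal (RCLike.ofReal ∘ h.1.eigenvalues) := by
    rw [diagonal_mul_diagonal]
    congr 1
    funext i
    simp [Real.mul_self_sqrt (h.eigenvalues_nonneg i)]
  conv_rhs => rw [h.1.spectral_theorem, Unitary.conjStarAlgAut_apply]
  rw [← hDD]
  simp only [Matrix.mul_assoc]
  rw [← Matrix.mul_assoc (star _ : Matrix (Fin n) (Fin n) ℝ), hU, Matrix.one_mul]

lemma trace_nonneg_of_psd {n : ℕ} {M : Matrix (Fin n) (Fin n) ℝ} (hM : M.PosSemidef) :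
    0 ≤ M.trace := by
  rw [Matrix.trace]
  refine Finset.sum_nonneg fun i _ => ?_
  have := hM.dotProduct_mulVec_nonneg (Pi.single i 1)
  simpa [dotProduct, Matrix.mulVec, Pi.single_apply, Matrix.diag] using this

lemma psd_smul {n : ℕ} {M : Matrix (Fin n) (Fin n) ℝ} (hM : M.PosSemidef) {c : ℝ}
    (hc : 0 ≤ c) : (c • M).PosSemidef := by
  constructor
  · have := hM.1
    rw [Matrix.IsHermitian] at this ⊢
    rw [Matrix.conjTranspose_smul, this]
    simp
  · intro x
    exact (hM.smul hc).2 x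

lemma trace_mul_nonneg_of_psd {n : ℕ} {P Q : Matrix (Fin n) (Fin n) ℝ}
    (hP : P.PosSemidef) (hQ : Q.PosSemidef) : 0 ≤ (P * Q).trace := by
  have hs : psdSqrt P * psdSqrt P = P := psdSqrt_mul_self hP
  have h1 : (P * Q).trace = (psdSqrt P * Q * psdSqrt P).trace := by
    conv_lhs => rw [← hs]
    rw [Matrix.mul_assoc, Matrix.trace_mul_comm]
  rw [h1]
  have := hQ.mul_mul_conjTranspose_same (psdSqrt P)
  rw [(psdSqrt_posSemidef hP).1.eq] at this
  exact trace_nonneg_of_psd this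

/-- nonnegativity of the squared Bures–Wasserstein distance
`Tr[Σ₁ + Σ₂ − 2(Σ₂^{1/2} Σ₁ Σ₂^{1/2})^{1/2}] ≥ 0`. -/
theorem bures_sq_nonneg {n : ℕ}
    (Sig1 Sig2 : Matrix (Fin n) (Fin n) ℝ)
    (hSig1 : Sig1.PosSemidef) (hSig2 : Sig2.PosSemidef) :
    0 ≤ (Sig1 + Sig2 - (2 : ℝ) • psdSqrt (psdSqrt Sig2 * Sig1 * psdSqrt Sig2)).trace := by
  set S2 := psdSqrt Sig2 with hS2def
  have hS2 : S2.PosSemidef := psdSqrt_posSemidef hSig2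
  have hS2sq : S2 * S2 = Sig2 := psdSqrt_mul_self hSig2
  have hMpsd : (S2 * Sig1 * S2).PosSemidef := by
    have := hSig1.mul_mul_conjTranspose_same S2
    rwa [hS2.1.eq] at this
  set C := psdSqrt (S2 * Sig1 * S2) with hCdef
  have hC : C.PosSemidef := psdSqrt_posSemidef hMpsd
  have hCsq : C * C = S2 * Sig1 * S2 := psdSqrt_mul_self hMpsd
  rw [Matrix.trace_sub, Matrix.trace_add, Matrix.trace_smul, smul_eq_mul, sub_nonneg]
  -- suffices: ∀ ε > 0, 2 * C.trace ≤ Sig1.trace + Sig2.trace + ε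
  refine le_of_forall_pos_le_add fun ε hε => ?_
  set δ : ℝ := ε / (n + 1) with hδdef
  have hδ : 0 < δ := by positivity
  set X : Matrix (Fin n) (Fin n) ℝ := Sig2 + δ • 1 with hXdef
  have hδ1 : ((δ : ℝ) • (1 : Matrix (Fin n) (Fin n) ℝ)).PosDef := by
    rw [Matrix.smul_one_eq_diagonal]
    exact Matrix.PosDef.diagonal fun i => hδ
  have hXpd : X.PosDef := Matrix.PosDef.posSemidef_add hSig2 hδ1
  have hdet : IsUnit X.det := hXpd.det_pos.ne'.isUnit
  have hXinv : X⁻¹.PosDef := hXpd.inv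
  -- S2 commutes with X and X⁻¹
  have hcomm : S2 * X = X * S2 := by
    rw [hXdef, ← hS2sq]
    noncomm_ring
  have hcomm' : S2 * X⁻¹ = X⁻¹ * S2 := by
    calc S2 * X⁻¹ = (X⁻¹ * X) * S2 * X⁻¹ := by
          rw [Matrix.nonsing_inv_mul _ hdet, Matrix.one_mul]
      _ = X⁻¹ * (X * S2) * X⁻¹ := by rw [Matrix.mul_assoc X⁻¹ X S2]
      _ = X⁻¹ * (S2 * X) * X⁻¹ := by rw [hcomm]
      _ = X⁻¹ * S2 * (X * X⁻¹) := by
          rw [← Matrix.mul_assoc X⁻¹ S2 X, Matrix.mul_assoc (X⁻¹ * S2) X X⁻¹]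
      _ = X⁻¹ * S2 := by rw [Matrix.mul_nonsing_inv _ hdet, Matrix.mul_one]
  have hcomm2 : Sig2 * X⁻¹ = X⁻¹ * Sig2 := by
    rw [← hS2sq, Matrix.mul_assoc, hcomm', ← Matrix.mul_assoc, hcomm', Matrix.mul_assoc]
  -- key PSD matrix : (C - X) X⁻¹ (C - X)
  have hkey : ((C - X) * X⁻¹ * (C - X)).PosSemidef := by
    have := hXinv.posSemidef.mul_mul_conjTranspose_same (C - X)
    have hherm : (C - X)ᴴ = C - X := by
      rw [Matrix.conjTranspose_sub, hC.1.eq, hXpd.1.eq]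
    rwa [hherm] at this
  have hexp : (C - X) * X⁻¹ * (C - X) = C * X⁻¹ * C - C - C + X := by
    have e1 : X * X⁻¹ = 1 := Matrix.mul_nonsing_inv _ hdet
    have e2 : X⁻¹ * X = 1 := Matrix.nonsing_inv_mul _ hdet
    calc (C - X) * X⁻¹ * (C - X)
        = C * X⁻¹ * C - C * (X⁻¹ * X) - (X * X⁻¹) * C + (X * X⁻¹) * X := by
          noncomm_ring
      _ = C * X⁻¹ * C - C - C + X := by
          rw [e1, e2, Matrix.mul_one, Matrix.one_mul, Matrix.one_mul]
  have htr : 0 ≤ (C * X⁻¹ * C).trace - 2 * C.trace + X.trace := by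
    have h0 := trace_nonneg_of_psd hkey
    rw [hexp] at h0
    rw [Matrix.trace_add, Matrix.trace_sub, Matrix.trace_sub] at h0
    linarith
  -- tr(C X⁻¹ C) = tr(X⁻¹ Sig2 Sig1) ≤ tr Sig1
  have hmid : S2 * (X⁻¹ * S2) = X⁻¹ * Sig2 := by
    rw [← Matrix.mul_assoc, hcomm', Matrix.mul_assoc, hS2sq]
  have htr1 : (C * X⁻¹ * C).trace = (X⁻¹ * Sig2 * Sig1).trace := by
    calc (C * X⁻¹ * C).trace = ((X⁻¹ * C) * C).trace := by
          rw [Matrix.mul_assoc, Matrix.trace_mul_comm]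
      _ = (X⁻¹ * (S2 * Sig1 * S2)).trace := by rw [Matrix.mul_assoc, hCsq]
      _ = ((X⁻¹ * S2) * (Sig1 * S2)).trace := by simp only [Matrix.mul_assoc]
      _ = ((Sig1 * S2) * (X⁻¹ * S2)).trace := Matrix.trace_mul_comm _ _
      _ = (Sig1 * (X⁻¹ * Sig2)).trace := by rw [Matrix.mul_assoc Sig1 S2, hmid]
      _ = ((X⁻¹ * Sig2) * Sig1).trace := Matrix.trace_mul_comm _ _
  have hone : (1 : Matrix (Fin n) (Fin n) ℝ) - X⁻¹ * Sig2 = δ • X⁻¹ := by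
    have : X⁻¹ * X = 1 := Matrix.nonsing_inv_mul _ hdet
    calc (1 : Matrix (Fin n) (Fin n) ℝ) - X⁻¹ * Sig2
        = X⁻¹ * X - X⁻¹ * Sig2 := by rw [this]
      _ = X⁻¹ * (X - Sig2) := by rw [Matrix.mul_sub]
      _ = X⁻¹ * (δ • 1) := by rw [hXdef, add_sub_cancel_left]
      _ = δ • X⁻¹ := by rw [mul_smul_comm, Matrix.mul_one]
  have htr2 : (X⁻¹ * Sig2 * Sig1).trace ≤ Sig1.trace := by
    have hpsd : ((δ • X⁻¹) * Sig1).PosSemidef → True := fun _ => trivial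
    have h1 : 0 ≤ ((δ • X⁻¹) * Sig1).trace :=
      trace_mul_nonneg_of_psd (psd_smul hXinv.posSemidef hδ.le) hSig1
    have h2 : ((1 : Matrix (Fin n) (Fin n) ℝ) - X⁻¹ * Sig2) * Sig1
        = Sig1 - X⁻¹ * Sig2 * Sig1 := by rw [Matrix.sub_mul, Matrix.one_mul]
    rw [← hone, h2, Matrix.trace_sub] at h1
    linarith
  have htrX : X.trace = Sig2.trace + δ * n := by
    rw [hXdef, Matrix.trace_add, Matrix.trace_smul, Matrix.trace_one]
    simp [smul_eq_mul]
  have hδn : δ * n < ε := by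
    rw [hδdef]
    rw [div_mul_eq_mul_div, div_lt_iff₀ (by positivity)]
    nlinarith [hε]
  linarith
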